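/- arXiv:2012.10929 — 4 statements merged into one kernel-verified Lean document; each statement's English description precedes it below -/
import Mathlib

section
/- (Theorem 2) Let C_t = convexHull ℝ {y_1^(t), …, y_n^(t)} be the convex hull of the WBMS iterates at step t. Then the sequence of convex hulls is decreasing: C_{t+1} ⊆ C_t for every t ≥ 0. -/
/-! Each WBMS update replaces `y_i` by an average of the current iterates with positive
(Gaussian) weights normalised to sum to one, so every new iterate lies in the current hull. -/

open Finset

theorem sum_div_sum_smul_mem_convexHull {𝕜 E ι : Type*} [Field 𝕜] [LinearOrder 𝕜]
    [IsStrictOrderedRing 𝕜] [AddCommGroup E] [Module 𝕜 E] [Fintype ι]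
    {a : ι → 𝕜} (ha : ∀ j, 0 ≤ a j) (hsum : ∑ j, a j ≠ 0) (v : ι → E) :
    ∑ j, (a j / ∑ j', a j') • v j ∈ convexHull 𝕜 (Set.range v) :=
  (convex_convexHull 𝕜 _).sum_mem
    (fun j _ => div_nonneg (ha j) (sum_nonneg fun j' _ => ha j'))
    (by rw [← sum_div, div_self hsum])
    (fun j _ => subset_convexHull 𝕜 _ ⟨j, rfl⟩)

theorem wbms_convexHull_decreasing_general
    (n p : ℕ)
    (h : ℝ)
    (y : ℕ → Fin n → Fin p → ℝ) (w : ℕ → Fin p → ℝ)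
    (hy : ∀ t i, y (t + 1) i =
      ∑ j, (Real.exp (-(∑ l, w t l * (y t i l - y t j l) ^ 2) / h) /
        ∑ j' : Fin n, Real.exp (-(∑ l, w t l * (y t i l - y t j' l) ^ 2) / h)) • y t j)
    (C : ℕ → Set (Fin p → ℝ))
    (hC : ∀ t, C t = convexHull ℝ (Set.range (y t))) :
    ∀ t : ℕ, C (t + 1) ⊆ C t := by
  intro t
  rw [hC, hC]
  refine convexHull_min (Set.range_subset_iff.2 fun i => ?_) (convex_convexHull ℝ _)
  rw [hy t i]
  have hpos : 0 < ∑ j : Fin n, Real.exp (-(∑ l, w t l * (y t i l - y t j l) ^ 2) / h) :=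
    sum_pos (fun j _ => Real.exp_pos _) ⟨i, mem_univ i⟩
  exact sum_div_sum_smul_mem_convexHull (fun j => (Real.exp_pos _).le) hpos.ne' (y t)

/-- Theorem 2: the convex hulls `C_t = convexHull ℝ {y_1^(t),…,y_n^(t)}`
of the WBMS iterates form a decreasing sequence of sets. -/
theorem wbms_convexHull_decreasing
    (n p : ℕ) (hn : 0 < n) (hp : 0 < p)
    (x : Fin n → Fin p → ℝ) (h lam : ℝ) (hh : 0 < h) (hlam : 0 < lam)
    (y : ℕ → Fin n → Fin p → ℝ) (w : ℕ → Fin p → ℝ)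
    (hy0 : ∀ i, y 0 i = x i)
    (hw : ∀ t l, w t l =
      Real.exp (-(1 / (n * lam)) * ∑ i, (x i l - y t i l) ^ 2) /
        ∑ l' : Fin p, Real.exp (-(1 / (n * lam)) * ∑ i, (x i l' - y t i l') ^ 2))
    (hy : ∀ t i, y (t + 1) i =
      ∑ j, (Real.exp (-(∑ l, w t l * (y t i l - y t j l) ^ 2) / h) /
        ∑ j' : Fin n, Real.exp (-(∑ l, w t l * (y t i l - y t j' l) ^ 2) / h)) • y t j)
    (C : ℕ → Set (Fin p → ℝ))
    (hC : ∀ t, C t = convexHull ℝ (Set.range (y t))) :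
    ∀ t : ℕ, C (t + 1) ⊆ C t :=
  wbms_convexHull_decreasing_general n p h y w hy C hC
end

section
/- Define a_t = max_{1 ≤ i,j ≤ n} ‖y_i^(t) − y_j^(t)‖₂, the maximum pairwise Euclidean distance among the WBMS iterates at step t. Then the sequence (a_t) is nonincreasing: a_{t+1} ≤ a_t for every t ≥ 0. -/
/-!
Each WBMS update replaces every point by a softmax-weighted average of the current points, so the
new points lie in the convex hull of the old ones. A convex hull has the same diameter as the set it
is built on, so the largest pairwise distance cannot grow.
-/

open Real Set

theorem sum_exp_div_sum_exp_smul_mem_convexHull {ι E : Type*} [Fintype ι] [Nonempty ι]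
    [AddCommGroup E] [Module ℝ E] (g : ι → ℝ) (v : ι → E) :
    ∑ j, (exp (g j) / ∑ j', exp (g j')) • v j ∈ convexHull ℝ (range v) := by
  have hpos : 0 < ∑ j', exp (g j') := Finset.sum_pos (fun j _ ↦ exp_pos _) Finset.univ_nonempty
  refine (convex_convexHull ℝ _).sum_mem (fun j _ ↦ by positivity) ?_
    fun j _ ↦ subset_convexHull ℝ _ (mem_range_self j)
  rw [← Finset.sum_div, div_self hpos.ne']

theorem dist_le_of_mem_convexHull {E : Type*} [NormedAddCommGroup E] [NormedSpace ℝ E]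
    {s : Set E} {D : ℝ} (hs : ∀ a ∈ s, ∀ b ∈ s, dist a b ≤ D) {x y : E}
    (hx : x ∈ convexHull ℝ s) (hy : y ∈ convexHull ℝ s) : dist x y ≤ D := by
  obtain ⟨a, ha, b, hb, hab⟩ := convexHull_exists_dist_ge2 hx hy
  exact hab.trans (hs a ha b hb)

theorem iSup_iSup_dist_le_of_mem_convexHull {ι κ E : Type*} [Finite ι]
    [NormedAddCommGroup E] [NormedSpace ℝ E] {u : ι → E} {v : κ → E}
    (hv : ∀ k, v k ∈ convexHull ℝ (range u)) :
    ⨆ k, ⨆ k', dist (v k) (v k') ≤ ⨆ i, ⨆ j, dist (u i) (u j) := by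
  have hu : ∀ i j, dist (u i) (u j) ≤ ⨆ i, ⨆ j, dist (u i) (u j) := fun i j ↦
    (le_ciSup (Finite.bddAbove_range _) j).trans
      (le_ciSup (Finite.bddAbove_range (fun i ↦ ⨆ j, dist (u i) (u j))) i)
  have hnonneg : 0 ≤ ⨆ i, ⨆ j, dist (u i) (u j) :=
    Real.iSup_nonneg fun _ ↦ Real.iSup_nonneg fun _ ↦ dist_nonneg
  refine Real.iSup_le (fun k ↦ Real.iSup_le (fun k' ↦ ?_) hnonneg) hnonneg
  refine dist_le_of_mem_convexHull ?_ (hv k) (hv k')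
  rintro _ ⟨i, rfl⟩ _ ⟨j, rfl⟩
  exact hu i j

theorem EuclideanSpace.dist_toLp_eq_sqrt {ι : Type*} [Fintype ι] (u v : ι → ℝ) :
    dist (WithLp.toLp 2 u : EuclideanSpace ℝ ι) (WithLp.toLp 2 v) = √(∑ l, (u l - v l) ^ 2) := by
  simp only [EuclideanSpace.dist_eq, Real.dist_eq, sq_abs]

theorem wbms_max_pairwise_distance_antitone_general
    (n p : ℕ) (h : ℝ)
    (y : ℕ → Fin n → Fin p → ℝ) (w : ℕ → Fin p → ℝ)
    (hy : ∀ t i, y (t + 1) i =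
      ∑ j, (Real.exp (-(∑ l, w t l * (y t i l - y t j l) ^ 2) / h) /
        ∑ j' : Fin n, Real.exp (-(∑ l, w t l * (y t i l - y t j' l) ^ 2) / h)) • y t j)
    (a : ℕ → ℝ)
    (ha : ∀ t, a t = ⨆ i : Fin n, ⨆ j : Fin n,
      Real.sqrt (∑ l, (y t i l - y t j l) ^ 2)) :
    ∀ t : ℕ, a (t + 1) ≤ a t := by
  intro t
  let Y : ℕ → Fin n → EuclideanSpace ℝ (Fin p) := fun s i ↦ WithLp.toLp 2 (y s i)
  have hY : ∀ i, Y (t + 1) i ∈ convexHull ℝ (range (Y t)) := fun i ↦ by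
    have : Nonempty (Fin n) := ⟨i⟩
    simp only [Y, hy t i, WithLp.toLp_sum, WithLp.toLp_smul]
    exact sum_exp_div_sum_exp_smul_mem_convexHull _ (Y t)
  simp only [ha, ← EuclideanSpace.dist_toLp_eq_sqrt]
  exact iSup_iSup_dist_le_of_mem_convexHull hY

/-- the maximum pairwise Euclidean distance among the WBMS
iterates, `a_t = max_{i,j} ‖y_i^(t) − y_j^(t)‖₂`, is nonincreasing in `t`. -/
theorem wbms_max_pairwise_distance_antitone
    (n p : ℕ) (hn : 0 < n) (hp : 0 < p)
    (x : Fin n → Fin p → ℝ) (h lam : ℝ) (hh : 0 < h) (hlam : 0 < lam)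
    (y : ℕ → Fin n → Fin p → ℝ) (w : ℕ → Fin p → ℝ)
    (hy0 : ∀ i, y 0 i = x i)
    (hw : ∀ t l, w t l =
      Real.exp (-(1 / (n * lam)) * ∑ i, (x i l - y t i l) ^ 2) /
        ∑ l' : Fin p, Real.exp (-(1 / (n * lam)) * ∑ i, (x i l' - y t i l') ^ 2))
    (hy : ∀ t i, y (t + 1) i =
      ∑ j, (Real.exp (-(∑ l, w t l * (y t i l - y t j l) ^ 2) / h) /
        ∑ j' : Fin n, Real.exp (-(∑ l, w t l * (y t i l - y t j' l) ^ 2) / h)) • y t j)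
    (a : ℕ → ℝ)
    (ha : ∀ t, a t = ⨆ i : Fin n, ⨆ j : Fin n,
      Real.sqrt (∑ l, (y t i l - y t j l) ^ 2)) :
    ∀ t : ℕ, a (t + 1) ≤ a t :=
  wbms_max_pairwise_distance_antitone_general n p h y w hy a ha
end

section
/- (Theorem 5, convergence) For the population-level standard-deviation recursion of WBMS, if the feature-weight sequence converges, w_t → w for some w ≥ 0, then s_t → 0 as t → ∞. -/
/-!
Writing `s_{t+1} = s_t · s_t² / (s_t² + h/(2 w_t))`, every step shrinks `|s_t|`, so `|s_t| ≤ |s_0|`.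
A convergent sequence `w_t` is bounded above by some `W`, so `h/(2 w_t) ≥ h/(2W) > 0`, and the
shrinking factor is at most `q = s_0² / (s_0² + h/(2W)) < 1`. Hence `|s_t| ≤ q^t |s_0| → 0`.
-/

open Filter Topology

theorem tendsto_zero_of_norm_succ_le_mul {E : Type*} [SeminormedAddGroup E] {f : ℕ → E} {q : ℝ}
    (hq₀ : 0 ≤ q) (hq₁ : q < 1) (hf : ∀ n, ‖f (n + 1)‖ ≤ q * ‖f n‖) :
    Tendsto f atTop (𝓝 0) :=
  squeeze_zero_norm (fun n => le_geom (u := fun n => ‖f n‖) hq₀ n fun k _ => hf k) <| by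
    simpa using (tendsto_pow_atTop_nhds_zero_of_lt_one hq₀ hq₁).mul_const ‖f 0‖

section CubeDivSqAdd

variable {x c : ℝ}

theorem abs_pow_three_div_sq_add (hc : 0 ≤ c) :
    |x ^ 3 / (x ^ 2 + c)| = x ^ 2 / (x ^ 2 + c) * |x| := by
  have hden : 0 ≤ x ^ 2 + c := by positivity
  rw [abs_div, abs_of_nonneg hden, pow_succ, abs_mul, abs_pow, sq_abs, mul_div_right_comm]

theorem abs_pow_three_div_sq_add_le (hc : 0 ≤ c) : |x ^ 3 / (x ^ 2 + c)| ≤ |x| := by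
  rw [abs_pow_three_div_sq_add hc]
  exact mul_le_of_le_one_left (abs_nonneg x)
    (div_le_one_of_le₀ (le_add_of_nonneg_right hc) (by positivity))

theorem abs_pow_three_div_sq_add_le_mul {c₀ M : ℝ} (hc₀ : 0 < c₀) (hc : c₀ ≤ c) (hx : |x| ≤ M) :
    |x ^ 3 / (x ^ 2 + c)| ≤ M ^ 2 / (M ^ 2 + c₀) * |x| := by
  rw [abs_pow_three_div_sq_add (hc₀.le.trans hc)]
  refine mul_le_mul_of_nonneg_right ?_ (abs_nonneg x)
  have hxM : x ^ 2 ≤ M ^ 2 := sq_le_sq' (neg_le_of_abs_le hx) (le_of_abs_le hx)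
  rw [div_le_div_iff₀ (by nlinarith [sq_nonneg x]) (by positivity)]
  nlinarith [sq_nonneg x]

end CubeDivSqAdd

theorem wbms_sd_tendsto_zero_general
    (h : ℝ) (hh : 0 < h) (w : ℕ → ℝ) (hw : ∀ t, 0 < w t)
    (s : ℕ → ℝ)
    (hrec : ∀ t, s (t + 1) = (s t) ^ 3 / ((s t) ^ 2 + h / (2 * w t)))
    (wl : ℝ)
    (hconv : Filter.Tendsto w Filter.atTop (nhds wl)) :
    Filter.Tendsto s Filter.atTop (nhds 0) := by
  obtain ⟨W, hW⟩ := hconv.bddAbove_range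
  have hwW : ∀ t, w t ≤ W := fun t => hW ⟨t, rfl⟩
  have hW₀ : 0 < W := (hw 0).trans_le (hwW 0)
  have hc₀ : 0 < h / (2 * W) := by positivity
  have hc : ∀ t, h / (2 * W) ≤ h / (2 * w t) := fun t =>
    div_le_div_of_nonneg_left hh.le (by linarith [hw t]) (by linarith [hwW t])
  have hs_le : ∀ t, |s t| ≤ |s 0| := by
    refine fun t => antitone_nat_of_succ_le (f := fun t => |s t|) (fun t => ?_) t.zero_le
    rw [hrec]
    exact abs_pow_three_div_sq_add_le (hc₀.le.trans (hc t))
  refine tendsto_zero_of_norm_succ_le_mul (q := |s 0| ^ 2 / (|s 0| ^ 2 + h / (2 * W)))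
    (by positivity) ((div_lt_one (by positivity)).2 (lt_add_of_pos_right _ hc₀)) fun t => ?_
  simp only [Real.norm_eq_abs, hrec]
  exact abs_pow_three_div_sq_add_le_mul hc₀ (hc t) (hs_le t)

/-- Theorem 5, convergence: if the feature weights converge,
`w_t → w` with `w ≥ 0`, then the population-level standard deviations of WBMS
converge to zero. -/
theorem wbms_sd_tendsto_zero
    (h : ℝ) (hh : 0 < h) (w : ℕ → ℝ) (hw : ∀ t, 0 < w t)
    (σ : ℝ) (hσ : 0 < σ)
    (s : ℕ → ℝ) (hs0 : s 0 = σ)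
    (hrec : ∀ t, s (t + 1) = (s t) ^ 3 / ((s t) ^ 2 + h / (2 * w t)))
    (wl : ℝ) (hwl : 0 ≤ wl)
    (hconv : Filter.Tendsto w Filter.atTop (nhds wl)) :
    Filter.Tendsto s Filter.atTop (nhds 0) :=
  wbms_sd_tendsto_zero_general h hh w hw s hrec wl hconv
end

section
/- (Theorem 5, cubic rate) For the population-level standard-deviation recursion of WBMS, if the feature-weight sequence converges to a positive limit, w_t → w with w > 0, then the convergence of s_t to 0 is of at least cubic order with asymptotic rate 2w/h: specifically, s_{t+1} / s_t³ → 2w/h as t → ∞. -/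
/-!
Writing `c t = h / (2 w t)`, the recursion gives `s (t+1) / s t ^ 3 = 1 / (s t ^ 2 + c t)`
exactly, so it suffices that `s t → 0`. The sequence is positive and decreasing, hence
convergent, and its limit `L` is a fixed point of `x ↦ x ^ 3 / (x ^ 2 + c∞)` with
`c∞ = h / (2 w∞) > 0`, forcing `L = 0`.
-/

open Filter Topology

namespace CubicRecursion

variable {s c : ℕ → ℝ} (hc : ∀ t, 0 < c t)
  (hrec : ∀ t, s (t + 1) = s t ^ 3 / (s t ^ 2 + c t))
include hc hrec

lemma pos (h0 : 0 < s 0) (t : ℕ) : 0 < s t := by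
  induction t with
  | zero => exact h0
  | succ n ih =>
    rw [hrec n]
    have := hc n
    positivity

lemma antitone (h0 : 0 < s 0) : Antitone s := by
  refine antitone_nat_of_succ_le fun n => ?_
  have hs := pos hc hrec h0 n
  have hcn := hc n
  rw [hrec n, div_le_iff₀ (by positivity)]
  nlinarith [mul_pos hs hcn]

lemma div_cube_eq (h0 : 0 < s 0) (t : ℕ) :
    s (t + 1) / s t ^ 3 = (s t ^ 2 + c t)⁻¹ := by
  have := (pos hc hrec h0 t).ne'
  rw [hrec t]
  field_simp

lemma tendsto_zero (h0 : 0 < s 0) {c₀ : ℝ} (hc₀ : 0 < c₀)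
    (hlim : Tendsto c atTop (𝓝 c₀)) :
    Tendsto s atTop (𝓝 0) := by
  have hbdd : BddBelow (Set.range s) :=
    ⟨0, by rintro _ ⟨t, rfl⟩; exact (pos hc hrec h0 t).le⟩
  set L := ⨅ t, s t
  have hL : Tendsto s atTop (𝓝 L) := tendsto_atTop_ciInf (antitone hc hrec h0) hbdd
  have hfix : L = L ^ 3 / (L ^ 2 + c₀) := by
    have hstep : Tendsto (fun t => s t ^ 3 / (s t ^ 2 + c t)) atTop
        (𝓝 (L ^ 3 / (L ^ 2 + c₀))) :=
      (hL.pow 3).div ((hL.pow 2).add hlim) (by positivity)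
    refine tendsto_nhds_unique (hL.comp (tendsto_add_atTop_nat 1)) ?_
    simpa only [Function.comp_def, hrec] using hstep
  have hLc : L * c₀ = 0 := by
    rw [eq_div_iff (by positivity)] at hfix
    linear_combination hfix
  rwa [(mul_eq_zero.mp hLc).resolve_right hc₀.ne'] at hL

end CubicRecursion

/-- Theorem 5, cubic rate: if `w_t → w > 0`, then the
convergence of `s_t` to zero is of at least cubic order with asymptotic rate
`2w/h`, i.e. `s_{t+1} / s_t³ → 2w/h`. -/
theorem wbms_sd_cubic_rate
    (h : ℝ) (hh : 0 < h) (w : ℕ → ℝ) (hw : ∀ t, 0 < w t)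
    (σ : ℝ) (hσ : 0 < σ)
    (s : ℕ → ℝ) (hs0 : s 0 = σ)
    (hrec : ∀ t, s (t + 1) = (s t) ^ 3 / ((s t) ^ 2 + h / (2 * w t)))
    (wl : ℝ) (hwl : 0 < wl)
    (hconv : Filter.Tendsto w Filter.atTop (nhds wl)) :
    Filter.Tendsto (fun t => s (t + 1) / (s t) ^ 3) Filter.atTop
      (nhds (2 * wl / h)) := by
  have hc : ∀ t, 0 < h / (2 * w t) := fun t => by have := hw t; positivity
  have h0 : 0 < s 0 := hs0 ▸ hσ
  have hclim : Tendsto (fun t => h / (2 * w t)) atTop (𝓝 (h / (2 * wl))) :=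
    tendsto_const_nhds.div (tendsto_const_nhds.mul hconv) (by positivity)
  have hs := CubicRecursion.tendsto_zero hc hrec h0 (by positivity) hclim
  have hlim := ((hs.pow 2).add hclim).inv₀ (by positivity)
  rw [zero_pow two_ne_zero, zero_add, inv_div] at hlim
  simpa only [CubicRecursion.div_cube_eq hc hrec h0] using hlim
end
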